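/- arXiv:1202.1484 — 3 statements merged into one kernel-verified Lean document; each statement's English description precedes it below -/
import Mathlib

section
/- For any joint distribution of the form P_A(a)·P_{S_e,S_d|A}(s_e,s_d|a)·P_{X|A,S_e}(x|a,s_e)·P_{Y|X,S_e,S_d}(y|x,s_e,s_d) on finite sets, the inequality I(A,S_e,X; Y,S_d) − H(S_e | A) ≤ I(A,X; Y,S_d) − I(X; S_e | A) holds. -/
/-!
Written out in joint entropies, the right side minus the left side is `H(S_e | A, X, Y, S_d)`.
This is nonnegative because adjoining a variable cannot decrease entropy, which in turn comes
from the subadditivity of `t ↦ -t log t` on `[0, ∞)`.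
-/

open Finset
noncomputable section
namespace IT

variable {Ω : Type} [Fintype Ω]

/-- Marginal probability mass of the event `X = a` under the weight function `p`. -/
def marg {α : Type} [Fintype α] [DecidableEq α]
    (p : Ω → ℝ) (X : Ω → α) (a : α) : ℝ :=
  ∑ ω, if X ω = a then p ω else 0

/-- Shannon entropy (natural logarithm) of the random variable `X`. -/
def ent {α : Type} [Fintype α] [DecidableEq α] (p : Ω → ℝ) (X : Ω → α) : ℝ :=
  ∑ a, Real.negMulLog (marg p X a)

/-- Conditional entropy `H(X | Y)`. -/
def condEnt {α β : Type} [Fintype α] [DecidableEq α] [Fintype β] [DecidableEq β]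
    (p : Ω → ℝ) (X : Ω → α) (Y : Ω → β) : ℝ :=
  ent p (fun ω => (X ω, Y ω)) - ent p Y

/-- Mutual information `I(X; Y)`. -/
def mi {α β : Type} [Fintype α] [DecidableEq α] [Fintype β] [DecidableEq β]
    (p : Ω → ℝ) (X : Ω → α) (Y : Ω → β) : ℝ :=
  ent p X + ent p Y - ent p (fun ω => (X ω, Y ω))

/-- Conditional mutual information `I(X; Y | Z)`. -/
def condMI {α β γ : Type} [Fintype α] [DecidableEq α] [Fintype β] [DecidableEq β]
    [Fintype γ] [DecidableEq γ]
    (p : Ω → ℝ) (X : Ω → α) (Y : Ω → β) (Z : Ω → γ) : ℝ :=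
  condEnt p X Z + condEnt p Y Z - condEnt p (fun ω => (X ω, Y ω)) Z

/-- `X` and `Y` are conditionally independent given `Z`:
`P(X=a, Z=c) ⬝ P(Y=b, Z=c) = P(X=a, Y=b, Z=c) ⬝ P(Z=c)`. -/
def CondIndep {α β γ : Type} [Fintype α] [DecidableEq α] [Fintype β] [DecidableEq β]
    [Fintype γ] [DecidableEq γ]
    (p : Ω → ℝ) (X : Ω → α) (Y : Ω → β) (Z : Ω → γ) : Prop :=
  ∀ a b c,
    marg p (fun ω => (X ω, Z ω)) (a, c) * marg p (fun ω => (Y ω, Z ω)) (b, c) =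
    marg p (fun ω => (X ω, Y ω, Z ω)) (a, b, c) * marg p Z c

/-- `p` is a probability mass function on `Ω`. -/
def IsProb (p : Ω → ℝ) : Prop := (∀ ω, 0 ≤ p ω) ∧ ∑ ω, p ω = 1

end IT

namespace Real

lemma negMulLog_add_le {a b : ℝ} (ha : 0 ≤ a) (hb : 0 ≤ b) :
    negMulLog (a + b) ≤ negMulLog a + negMulLog b := by
  have mul_log_le {x : ℝ} (hx : 0 ≤ x) (hxy : x ≤ a + b) : x * log x ≤ x * log (a + b) := by
    rcases hx.eq_or_lt with rfl | hx
    · simp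
    · exact mul_le_mul_of_nonneg_left (log_le_log hx hxy) hx.le
  simp only [negMulLog, neg_mul, add_mul]
  linarith [mul_log_le ha (by linarith), mul_log_le hb (by linarith)]

lemma negMulLog_sum_le {ι : Type*} (s : Finset ι) (f : ι → ℝ) (hf : ∀ i ∈ s, 0 ≤ f i) :
    negMulLog (∑ i ∈ s, f i) ≤ ∑ i ∈ s, negMulLog (f i) :=
  Finset.le_sum_of_subadditive_on_pred negMulLog (0 ≤ ·) negMulLog_zero.le
    (fun _ _ => negMulLog_add_le) (fun _ _ => add_nonneg) f hf

end Real

namespace IT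

variable {Ω α β : Type} [Fintype Ω] [Fintype α] [DecidableEq α] [Fintype β] [DecidableEq β]
  {p : Ω → ℝ}

lemma marg_nonneg (hp : ∀ ω, 0 ≤ p ω) (X : Ω → α) (a : α) : 0 ≤ marg p X a :=
  Finset.sum_nonneg fun ω _ => by split_ifs <;> simp [hp ω]

lemma marg_eq_sum_marg_pair (X : Ω → α) (Y : Ω → β) (b : β) :
    marg p Y b = ∑ a, marg p (fun ω => (X ω, Y ω)) (a, b) := by
  unfold marg
  rw [Finset.sum_comm]
  refine Finset.sum_congr rfl fun ω _ => ?_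
  simp [Prod.ext_iff, ite_and]

lemma ent_le_ent_pair (hp : ∀ ω, 0 ≤ p ω) (X : Ω → α) (Y : Ω → β) :
    ent p Y ≤ ent p (fun ω => (X ω, Y ω)) := by
  unfold ent
  rw [Fintype.sum_prod_type_right]
  refine Finset.sum_le_sum fun b _ => ?_
  rw [marg_eq_sum_marg_pair X Y b]
  exact Real.negMulLog_sum_le _ _ fun _ _ => marg_nonneg hp _ _

lemma condEnt_nonneg (hp : ∀ ω, 0 ≤ p ω) (X : Ω → α) (Y : Ω → β) : 0 ≤ condEnt p X Y :=
  sub_nonneg.2 (ent_le_ent_pair hp X Y)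

lemma ent_comp_of_injective {f : α → β} (hf : Function.Injective f) (X : Ω → α) :
    ent p (fun ω => f (X ω)) = ent p X := by
  refine (Fintype.sum_of_injective f hf _ _ (fun b hb => ?_) fun a => ?_).symm
  · have : ∀ ω, f (X ω) ≠ b := fun ω h => hb ⟨X ω, h⟩
    simp [marg, this]
  · simp [marg, hf.eq_iff]

end IT

section Channel
variable {At Et Dt Xt Yt : Type}
  [Fintype At] [DecidableEq At] [Fintype Et] [DecidableEq Et]
  [Fintype Dt] [DecidableEq Dt] [Fintype Xt] [DecidableEq Xt]
  [Fintype Yt] [DecidableEq Yt]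

theorem stmt4_general
    (p : At × Et × Dt × Xt × Yt → ℝ)
    (PA : At → ℝ) (PS : Et × Dt → At → ℝ)
    (PX : Xt → At → Et → ℝ) (PY : Yt → Xt → Et → Dt → ℝ)
    (hPA0 : ∀ a, 0 ≤ PA a)
    (hPS0 : ∀ s a, 0 ≤ PS s a)
    (hPX0 : ∀ x a e, 0 ≤ PX x a e)
    (hPY0 : ∀ y x e d, 0 ≤ PY y x e d)
    (hfac : ∀ a e d x y,
      p (a, e, d, x, y) = PA a * PS (e, d) a * PX x a e * PY y x e d) :
    IT.mi p (fun ω => (ω.1, ω.2.1, ω.2.2.2.1)) (fun ω => (ω.2.2.2.2, ω.2.2.1))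
      - IT.condEnt p (fun ω => ω.2.1) (fun ω => ω.1)
    ≤ IT.mi p (fun ω => (ω.1, ω.2.2.2.1)) (fun ω => (ω.2.2.2.2, ω.2.2.1))
      - IT.condMI p (fun ω => ω.2.2.2.1) (fun ω => ω.2.1) (fun ω => ω.1) := by
  have hp : ∀ ω, 0 ≤ p ω := by
    rintro ⟨a, e, d, x, y⟩
    rw [hfac]
    exact mul_nonneg (mul_nonneg (mul_nonneg (hPA0 a) (hPS0 _ a)) (hPX0 x a e)) (hPY0 y x e d)
  have key := IT.condEnt_nonneg hp (fun ω => ω.2.1)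
    (fun ω => ((ω.1, ω.2.2.2.1), (ω.2.2.2.2, ω.2.2.1)))
  have h_AX : IT.ent p (fun ω => (ω.1, ω.2.2.2.1)) = IT.ent p (fun ω => (ω.2.2.2.1, ω.1)) :=
    IT.ent_comp_of_injective (p := p) (Prod.swap_injective (α := Xt) (β := At))
      (fun ω => (ω.2.2.2.1, ω.1))
  have h_AEX : IT.ent p (fun ω => (ω.1, ω.2.1, ω.2.2.2.1))
      = IT.ent p (fun ω => ((ω.2.2.2.1, ω.2.1), ω.1)) :=
    IT.ent_comp_of_injective (p := p) (f := fun q : (Xt × Et) × At => (q.2, q.1.2, q.1.1))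
      (fun _ _ h => by simp_all [Prod.ext_iff]) (fun ω => ((ω.2.2.2.1, ω.2.1), ω.1))
  have h_all : IT.ent p (fun ω => ((ω.1, ω.2.1, ω.2.2.2.1), (ω.2.2.2.2, ω.2.2.1)))
      = IT.ent p (fun ω => (ω.2.1, ((ω.1, ω.2.2.2.1), (ω.2.2.2.2, ω.2.2.1)))) :=
    IT.ent_comp_of_injective (p := p)
      (f := fun q : Et × (At × Xt) × Yt × Dt => ((q.2.1.1, q.1, q.2.1.2), q.2.2))
      (fun _ _ h => by simp_all [Prod.ext_iff])
      (fun ω => (ω.2.1, ((ω.1, ω.2.2.2.1), (ω.2.2.2.2, ω.2.2.1))))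
  simp only [IT.mi, IT.condEnt, IT.condMI] at key ⊢
  linarith

/-- `I(A,S_e,X; Y,S_d) − H(S_e | A) ≤ I(A,X; Y,S_d) − I(X; S_e | A)`. -/
theorem stmt4
    (p : At × Et × Dt × Xt × Yt → ℝ)
    (PA : At → ℝ) (PS : Et × Dt → At → ℝ)
    (PX : Xt → At → Et → ℝ) (PY : Yt → Xt → Et → Dt → ℝ)
    (hPA0 : ∀ a, 0 ≤ PA a) (hPA1 : ∑ a, PA a = 1)
    (hPS0 : ∀ s a, 0 ≤ PS s a) (hPS1 : ∀ a, ∑ s, PS s a = 1)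
    (hPX0 : ∀ x a e, 0 ≤ PX x a e) (hPX1 : ∀ a e, ∑ x, PX x a e = 1)
    (hPY0 : ∀ y x e d, 0 ≤ PY y x e d) (hPY1 : ∀ x e d, ∑ y, PY y x e d = 1)
    (hfac : ∀ a e d x y,
      p (a, e, d, x, y) = PA a * PS (e, d) a * PX x a e * PY y x e d) :
    IT.mi p (fun ω => (ω.1, ω.2.1, ω.2.2.2.1)) (fun ω => (ω.2.2.2.2, ω.2.2.1))
      - IT.condEnt p (fun ω => ω.2.1) (fun ω => ω.1)
    ≤ IT.mi p (fun ω => (ω.1, ω.2.2.2.1)) (fun ω => (ω.2.2.2.2, ω.2.2.1))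
      - IT.condMI p (fun ω => ω.2.2.2.1) (fun ω => ω.2.1) (fun ω => ω.1) :=
  stmt4_general p PA PS PX PY hPA0 hPS0 hPX0 hPY0 hfac

end Channel
end
end

section
/- (Csiszár sum identity) For any jointly distributed finite random sequences Y₁,…,Yₙ and S₁,…,Sₙ and any random variable T, we have ∑_{i=1}^{n} I(S_{i+1}^{n}; Y_i | Y^{i-1}, T) = ∑_{i=1}^{n} I(Y^{i-1}; S_i | S_{i+1}^{n}, T), where S_{i+1}^n = (S_{i+1},…,S_n), Y^{i-1} = (Y_1,…,Y_{i-1}), with empty tuples when the ranges are empty. -/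
open Finset
noncomputable section
/-! Let `F k = H(Y^{<k}, T) + H(S^{≥k}, T) - H(S^{≥k}, Y^{<k}, T)`, i.e.
`I(Y^{<k}; S^{≥k} | T) + H(T)`. Expanding both conditional mutual informations into joint
entropies shows that the `i`-th summand on the left minus the `i`-th summand on the right is
`F (i + 1) - F i`. The difference of the two sums therefore telescopes to `F n - F 0`, and both
endpoints equal `H(T)` because one of the two tuples is empty there. -/

namespace IT

variable {Ω : Type} [Fintype Ω] {α β γ : Type} [Fintype α] [DecidableEq α]
  [Fintype β] [DecidableEq β] [Fintype γ] [DecidableEq γ]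

theorem ent_eq_of_injective (p : Ω → ℝ) {X : Ω → α} {X' : Ω → β} (f : α → β)
    (hf : Function.Injective f) (h : ∀ ω, X' ω = f (X ω)) : ent p X' = ent p X := by
  unfold ent
  rw [← Finset.sum_subset (Finset.subset_univ (Finset.univ.image f)),
    Finset.sum_image fun x _ y _ hxy => hf hxy]
  · refine Finset.sum_congr rfl fun a _ => congrArg _ (Finset.sum_congr rfl fun ω _ => ?_)
    simp [h ω, hf.eq_iff]
  · intro b _ hb
    have hmarg : marg p X' b = 0 := Finset.sum_eq_zero fun ω _ => if_neg fun hω =>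
      hb (Finset.mem_image.mpr ⟨X ω, Finset.mem_univ _, by rw [← h ω, hω]⟩)
    simp [hmarg]

theorem ent_prod_of_unique_left [Unique α] (p : Ω → ℝ) (A : Ω → α) (X : Ω → β) :
    ent p (fun ω => (A ω, X ω)) = ent p X :=
  ent_eq_of_injective p (fun x => (default, x)) (fun _ _ h => (Prod.ext_iff.1 h).2)
    fun _ => Prod.ext (Unique.eq_default _) rfl

theorem ent_prod_left_comm (p : Ω → ℝ) (X : Ω → α) (Y : Ω → β) (Z : Ω → γ) :
    ent p (fun ω => (X ω, (Y ω, Z ω))) = ent p (fun ω => (Y ω, (X ω, Z ω))) :=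
  ent_eq_of_injective p (fun x => (x.2.1, (x.1, x.2.2)))
    (fun _ _ h => by
      simp only [Prod.mk.injEq] at h
      exact Prod.ext h.2.1 (Prod.ext h.1 h.2.2)) fun _ => rfl

theorem condMI_eq_ent (p : Ω → ℝ) (X : Ω → α) (Y : Ω → β) (Z : Ω → γ) :
    condMI p X Y Z = ent p (fun ω => (X ω, Z ω)) + ent p (fun ω => (Y ω, Z ω))
      - ent p (fun ω => ((X ω, Y ω), Z ω)) - ent p Z := by
  unfold condMI condEnt
  ring

end IT

theorem funext_subtype_insert {ι α : Type*} {P R : ι → Prop} {i : ι} (hi : P i)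
    (hR : ∀ j, R j → P j) (hP : ∀ j, P j → j = i ∨ R j) {x x' : {j // P j} → α}
    (h_i : x ⟨i, hi⟩ = x' ⟨i, hi⟩) (h_R : ∀ j (hj : R j), x ⟨j, hR j hj⟩ = x' ⟨j, hR j hj⟩) :
    x = x' := by
  funext ⟨j, hj⟩
  rcases hP j hj with rfl | hj'
  · exact h_i
  · exact h_R j hj'

theorem Fin.funext_subtype_lt_succ {n : ℕ} {α : Type*} {i : Fin n}
    {x x' : {j : Fin n // (j : ℕ) < i + 1} → α}
    (h_i : x ⟨i, Nat.lt_succ_self _⟩ = x' ⟨i, Nat.lt_succ_self _⟩)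
    (h_lt : ∀ j : {j : Fin n // j < i},
      x ⟨j, Nat.lt_succ_of_lt j.2⟩ = x' ⟨j, Nat.lt_succ_of_lt j.2⟩) : x = x' :=
  funext_subtype_insert _ (fun _ => Nat.lt_succ_of_lt)
    (fun _ hj => (Nat.lt_succ_iff_lt_or_eq.1 hj).symm.imp Fin.ext id) h_i fun j hj => h_lt ⟨j, hj⟩

theorem Fin.funext_subtype_le {n : ℕ} {α : Type*} {i : Fin n}
    {x x' : {j : Fin n // (i : ℕ) ≤ j} → α}
    (h_i : x ⟨i, le_rfl⟩ = x' ⟨i, le_rfl⟩)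
    (h_gt : ∀ j : {j : Fin n // i < j}, x ⟨j, j.2.le⟩ = x' ⟨j, j.2.le⟩) : x = x' :=
  funext_subtype_insert _ (fun _ => le_of_lt)
    (fun _ hj => (hj.eq_or_lt.imp (Fin.ext ∘ Eq.symm) id)) h_i fun j hj => h_gt ⟨j, hj⟩

namespace IT

section Csiszar

variable {Ω : Type} [Fintype Ω] {n : ℕ} {𝒴 𝒮 𝒯 : Type}
  [Fintype 𝒴] [DecidableEq 𝒴] [Fintype 𝒮] [DecidableEq 𝒮] [Fintype 𝒯] [DecidableEq 𝒯]
  (p : Ω → ℝ) (Y : Ω → Fin n → 𝒴) (S : Ω → Fin n → 𝒮) (T : Ω → 𝒯)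

-- Thresholds are natural numbers: at `k = i` the index set `{j // (j : ℕ) < k}` is
-- definitionally the statement's `{j // j < i}`, and at `k = i + 1` the set
-- `{j // k ≤ (j : ℕ)}` is `{j // i < j}`.
def entPrefix (k : ℕ) : ℝ :=
  ent p (fun ω => ((fun j : {j : Fin n // (j : ℕ) < k} => Y ω j), T ω))

def entSuffix (k : ℕ) : ℝ :=
  ent p (fun ω => ((fun j : {j : Fin n // k ≤ (j : ℕ)} => S ω j), T ω))

def entSplit (k : ℕ) : ℝ :=
  ent p (fun ω => ((fun j : {j : Fin n // k ≤ (j : ℕ)} => S ω j),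
    ((fun j : {j : Fin n // (j : ℕ) < k} => Y ω j), T ω)))

def csiszarPotential (k : ℕ) : ℝ :=
  entPrefix p Y T k + entSuffix p S T k - entSplit p Y S T k

theorem ent_snoc_prefix (i : Fin n) :
    ent p (fun ω => (Y ω i, ((fun j : {j : Fin n // j < i} => Y ω j), T ω)))
      = entPrefix p Y T (i + 1) :=
  ent_eq_of_injective p (fun x => (x.1 ⟨i, Nat.lt_succ_self _⟩,
      ((fun j : {j : Fin n // j < i} => x.1 ⟨j, Nat.lt_succ_of_lt j.2⟩), x.2)))
    (fun _ _ h => by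
      simp only [Prod.mk.injEq] at h
      obtain ⟨h_i, h_lt, h_T⟩ := h
      exact Prod.ext (Fin.funext_subtype_lt_succ h_i (congrFun h_lt)) h_T)
    fun _ => rfl

theorem ent_snoc_split (i : Fin n) :
    ent p (fun ω => (((fun j : {j : Fin n // i < j} => S ω j), Y ω i),
        ((fun j : {j : Fin n // j < i} => Y ω j), T ω)))
      = entSplit p Y S T (i + 1) :=
  ent_eq_of_injective p (fun x => ((x.1, x.2.1 ⟨i, Nat.lt_succ_self _⟩),
      ((fun j : {j : Fin n // j < i} => x.2.1 ⟨j, Nat.lt_succ_of_lt j.2⟩), x.2.2)))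
    (fun _ _ h => by
      simp only [Prod.mk.injEq] at h
      obtain ⟨⟨h_S, h_i⟩, h_lt, h_T⟩ := h
      exact Prod.ext h_S (Prod.ext (Fin.funext_subtype_lt_succ h_i (congrFun h_lt)) h_T))
    fun _ => rfl

theorem ent_cons_suffix (i : Fin n) :
    ent p (fun ω => (S ω i, ((fun j : {j : Fin n // i < j} => S ω j), T ω)))
      = entSuffix p S T i :=
  ent_eq_of_injective p (fun x => (x.1 ⟨i, le_rfl⟩,
      ((fun j : {j : Fin n // i < j} => x.1 ⟨j, j.2.le⟩), x.2)))
    (fun _ _ h => by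
      simp only [Prod.mk.injEq] at h
      obtain ⟨h_i, h_gt, h_T⟩ := h
      exact Prod.ext (Fin.funext_subtype_le h_i (congrFun h_gt)) h_T)
    fun _ => rfl

theorem ent_cons_split (i : Fin n) :
    ent p (fun ω => (((fun j : {j : Fin n // j < i} => Y ω j), S ω i),
        ((fun j : {j : Fin n // i < j} => S ω j), T ω)))
      = entSplit p Y S T i :=
  ent_eq_of_injective p (fun x => ((x.2.1, x.1 ⟨i, le_rfl⟩),
      ((fun j : {j : Fin n // i < j} => x.1 ⟨j, j.2.le⟩), x.2.2)))
    (fun _ _ h => by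
      simp only [Prod.mk.injEq] at h
      obtain ⟨⟨h_Y, h_i⟩, h_gt, h_T⟩ := h
      exact Prod.ext (Fin.funext_subtype_le h_i (congrFun h_gt)) (Prod.ext h_Y h_T))
    fun _ => rfl

theorem condMI_sub_condMI_eq_csiszarPotential_sub (i : Fin n) :
    condMI p (fun ω => (fun j : {j : Fin n // i < j} => S ω j)) (fun ω => Y ω i)
        (fun ω => ((fun j : {j : Fin n // j < i} => Y ω j), T ω))
      - condMI p (fun ω => (fun j : {j : Fin n // j < i} => Y ω j)) (fun ω => S ω i)
        (fun ω => ((fun j : {j : Fin n // i < j} => S ω j), T ω))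
      = csiszarPotential p Y S T (i + 1) - csiszarPotential p Y S T i := by
  have h_prefix : ent p (fun ω => ((fun j : {j : Fin n // j < i} => Y ω j), T ω))
      = entPrefix p Y T i := rfl
  have h_suffix : ent p (fun ω => ((fun j : {j : Fin n // i < j} => S ω j), T ω))
      = entSuffix p S T (i + 1) := rfl
  rw [condMI_eq_ent, condMI_eq_ent,
    ent_prod_left_comm p (fun ω (j : {j : Fin n // j < i}) => Y ω j), ent_snoc_prefix,
    ent_snoc_split, ent_cons_suffix, ent_cons_split, h_prefix, h_suffix]
  unfold csiszarPotential
  ring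

theorem csiszarPotential_zero : csiszarPotential p Y S T 0 = ent p T := by
  have : IsEmpty {j : Fin n // (j : ℕ) < 0} := ⟨fun j => Nat.not_lt_zero _ j.2⟩
  have h_split : entSplit p Y S T 0 = entSuffix p S T 0 :=
    ent_eq_of_injective p (fun x => (x.1, (default, x.2)))
      (fun _ _ h => Prod.ext (Prod.ext_iff.1 h).1 (Prod.ext_iff.1 (Prod.ext_iff.1 h).2).2)
      fun _ => Prod.ext rfl (Prod.ext (Unique.eq_default _) rfl)
  rw [csiszarPotential, h_split, entPrefix, ent_prod_of_unique_left]
  ring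

theorem csiszarPotential_top : csiszarPotential p Y S T n = ent p T := by
  have : IsEmpty {j : Fin n // n ≤ (j : ℕ)} := ⟨fun j => j.1.is_lt.not_ge j.2⟩
  rw [csiszarPotential, entSplit, entSuffix, ent_prod_of_unique_left, ent_prod_of_unique_left,
    entPrefix]
  ring

end Csiszar

end IT

theorem stmt10_general
    {Ω : Type} [Fintype Ω] {n : ℕ} {𝒴 𝒮 𝒯 : Type}
    [Fintype 𝒴] [DecidableEq 𝒴] [Fintype 𝒮] [DecidableEq 𝒮]
    [Fintype 𝒯] [DecidableEq 𝒯]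
    (p : Ω → ℝ)
    (Y : Ω → Fin n → 𝒴) (S : Ω → Fin n → 𝒮) (T : Ω → 𝒯) :
    (∑ i : Fin n,
      IT.condMI p
        (fun ω => (fun j : {j : Fin n // i < j} => S ω j))
        (fun ω => Y ω i)
        (fun ω => ((fun j : {j : Fin n // j < i} => Y ω j), T ω)))
    = ∑ i : Fin n,
      IT.condMI p
        (fun ω => (fun j : {j : Fin n // j < i} => Y ω j))
        (fun ω => S ω i)
        (fun ω => ((fun j : {j : Fin n // i < j} => S ω j), T ω)) := by
  rw [← sub_eq_zero, ← Finset.sum_sub_distrib]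
  simp_rw [IT.condMI_sub_condMI_eq_csiszarPotential_sub]
  rw [Fin.sum_univ_eq_sum_range (fun k => IT.csiszarPotential p Y S T (k + 1)
      - IT.csiszarPotential p Y S T k), Finset.sum_range_sub, IT.csiszarPotential_top,
    IT.csiszarPotential_zero, sub_self]

/-- Csiszár sum identity:
`∑ i I(S_{i+1}^n; Y_i | Y^{i-1}, T) = ∑ i I(Y^{i-1}; S_i | S_{i+1}^n, T)`. -/
theorem stmt10
    {Ω : Type} [Fintype Ω] {n : ℕ} {𝒴 𝒮 𝒯 : Type}
    [Fintype 𝒴] [DecidableEq 𝒴] [Fintype 𝒮] [DecidableEq 𝒮]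
    [Fintype 𝒯] [DecidableEq 𝒯]
    (p : Ω → ℝ) (hp : IT.IsProb p)
    (Y : Ω → Fin n → 𝒴) (S : Ω → Fin n → 𝒮) (T : Ω → 𝒯) :
    (∑ i : Fin n,
      IT.condMI p
        (fun ω => (fun j : {j : Fin n // i < j} => S ω j))
        (fun ω => Y ω i)
        (fun ω => ((fun j : {j : Fin n // j < i} => Y ω j), T ω)))
    = ∑ i : Fin n,
      IT.condMI p
        (fun ω => (fun j : {j : Fin n // j < i} => Y ω j))
        (fun ω => S ω i)
        (fun ω => ((fun j : {j : Fin n // i < j} => S ω j), T ω)) :=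
  stmt10_general p Y S T
end
end

section
/- For a binary symmetric source X ∼ Bernoulli(1/2), binary side information S_d that is the output of a BSC with crossover probability p₀ ∈ (0,1/2) and input X, and Hamming distortion, the common-reconstruction rate-distortion function satisfies R_cr(D) = min over P_{X̂|X} with E[d_H(X,X̂)] ≤ D of I(X̂; X | S_d) = h(p₀ ⋆ D) − h(D) for all 0 ≤ D ≤ 1/2, where p₀ ⋆ D = p₀(1−D) + (1−p₀)D and h is the binary entropy function. -/
open Finset
noncomputable section
/-- Binary entropy (natural logarithm). -/
def hbin (t : ℝ) : ℝ := Real.negMulLog t + Real.negMulLog (1 - t)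

/-- Binary convolution `a ⋆ b = a(1−b) + (1−a)b`. -/
def star (a b : ℝ) : ℝ := a * (1 - b) + (1 - a) * b

/-- Joint law of `(X, S_d, X̂)` for a uniform binary source `X`, a `BSC(p₀)` producing
`S_d` from `X`, and a test channel `Qh = P_{X̂|X}`. -/
def jointCR (p0 : ℝ) (Qh : Bool → Bool → ℝ) : Bool × Bool × Bool → ℝ :=
  fun ω => (1 / 2) * (if ω.2.1 = ω.1 then 1 - p0 else p0) * Qh ω.2.2 ω.1

/-! With `a = P(X̂ = 1 | X = 0)` and `b = P(X̂ = 0 | X = 1)`, the Markov chain gives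
`I(X̂; X | S_d) = H(X̂ | S_d) - H(X̂ | X) = ½ (h(s + t) + h(s - t)) - ½ (h(d + t) + h(d - t))`,
where `d = (a + b)/2` is the distortion, `t = (a - b)/2` and `s = p₀ ⋆ d`. As `d ≤ s ≤ 1 - d`
and `|h''(x)| = 1/(x(1 - x))` grows towards the ends of `[0, 1]`, spreading `t` around `d` costs
more entropy than around `s`, so the symmetric channel `t = 0` is optimal and gives
`h(p₀ ⋆ d) - h(d)`. This is nonincreasing in `d ∈ [0, 1/2]`, whence the bound for `d ≤ D`,
attained by `BSC(D)`. -/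

open Real Set

@[fun_prop]
lemma continuous_hbin : Continuous hbin := by
  unfold hbin; fun_prop

lemma hasDerivAt_hbin {x : ℝ} (h0 : x ≠ 0) (h1 : x ≠ 1) :
    HasDerivAt hbin (log (1 - x) - log x) x :=
  ((hasDerivAt_negMulLog h0).add ((hasDerivAt_negMulLog (sub_ne_zero.2 h1.symm)).comp x
    ((hasDerivAt_id x).const_sub 1))).congr_deriv (by ring)

lemma HasDerivAt.hbin {f : ℝ → ℝ} {f' x : ℝ} (hf : HasDerivAt f f' x) (h0 : f x ≠ 0)
    (h1 : f x ≠ 1) :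
    HasDerivAt (fun y => hbin (f y)) ((Real.log (1 - f x) - Real.log (f x)) * f') x :=
  (hasDerivAt_hbin h0 h1).comp x hf

lemma hasDerivAt_star (p x : ℝ) : HasDerivAt (star p) (1 - 2 * p) x :=
  ((((hasDerivAt_id x).const_sub 1).const_mul p).add
    ((hasDerivAt_id x).const_mul (1 - p))).congr_deriv (by ring)

lemma monotoneOn_hbin_spread {d s : ℝ} (hds : d ≤ s) (hsd : s ≤ 1 - d) :
    MonotoneOn (fun t => hbin (s + t) + hbin (s - t) - (hbin (d + t) + hbin (d - t)))
      (Icc 0 d) := by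
  refine monotoneOn_of_hasDerivWithinAt_nonneg (convex_Icc 0 d) (by fun_prop)
    (f' := fun t => (log (1 - (s + t)) - log (s + t)) - (log (1 - (s - t)) - log (s - t))
      - ((log (1 - (d + t)) - log (d + t)) - (log (1 - (d - t)) - log (d - t))))
    (fun t ht => ?_) (fun t ht => ?_) <;>
  obtain ⟨ht0, htd⟩ : 0 < t ∧ t < d := by simpa using ht
  · have hadd (c : ℝ) (h0 : 0 < c + t) (h1 : c + t < 1) :=
      ((hasDerivAt_id' t).const_add c).hbin h0.ne' h1.ne
    have hsub (c : ℝ) (h0 : 0 < c - t) (h1 : c - t < 1) :=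
      ((hasDerivAt_id' t).const_sub c).hbin h0.ne' h1.ne
    refine (((hadd s (by linarith) (by linarith)).add (hsub s (by linarith) (by linarith))).sub
      ((hadd d (by linarith) (by linarith)).add
        (hsub d (by linarith) (by linarith)))).hasDerivWithinAt.congr_deriv (by ring)
  · have hdt : 0 < d - t := by linarith
    have hdt' : 0 < 1 - (d + t) := by linarith
    have hst : 0 < s - t := by linarith
    have hst' : 0 < 1 - (s + t) := by linarith
    have hdt₁ : 0 < d + t := by linarith
    have hdt₁' : 0 < 1 - (d - t) := by linarith
    have hst₁ : 0 < s + t := by linarith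
    have hst₁' : 0 < 1 - (s - t) := by linarith
    have key : (s + t) * (1 - (s - t)) * ((d - t) * (1 - (d + t))) ≤
        (d + t) * (1 - (d - t)) * ((s - t) * (1 - (s + t))) := by
      -- the two sides differ by `2t(s - d)(1 - s - d)`
      nlinarith [mul_nonneg (mul_nonneg ht0.le (sub_nonneg.2 hds)) (by linarith : 0 ≤ 1 - s - d)]
    have := log_le_log (by positivity) key
    rw [log_mul (by positivity) (by positivity), log_mul (by positivity) (by positivity),
      log_mul (by positivity) (by positivity), log_mul (by positivity) (by positivity),
      log_mul (by positivity) (by positivity), log_mul (by positivity) (by positivity)] at this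
    linarith

lemma antitoneOn_hbin_star_sub_hbin {p : ℝ} (hp0 : 0 ≤ p) (hp : p ≤ 1 / 2) :
    AntitoneOn (fun x => hbin (star p x) - hbin x) (Icc 0 (1 / 2)) := by
  refine antitoneOn_of_hasDerivWithinAt_nonpos (convex_Icc 0 (1 / 2))
    (by unfold _root_.star; fun_prop)
    (f' := fun x => (log (1 - star p x) - log (star p x)) * (1 - 2 * p) - (log (1 - x) - log x))
    (fun x hx => ?_) (fun x hx => ?_) <;>
  obtain ⟨hx0, hx⟩ : 0 < x ∧ x < 1 / 2 := by simpa using hx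
  all_goals have hxy : x ≤ star p x := by unfold _root_.star; nlinarith
  all_goals have hy : star p x ≤ 1 / 2 := by unfold _root_.star; nlinarith
  · exact (((hasDerivAt_star p x).hbin (by linarith) (by linarith)).sub
      (hasDerivAt_hbin hx0.ne' (by linarith))).hasDerivWithinAt
  · have hy0 : 0 ≤ log (1 - star p x) - log (star p x) :=
      sub_nonneg.2 (log_le_log (by linarith) (by linarith))
    have hxy' : log (1 - star p x) - log (star p x) ≤ log (1 - x) - log x :=
      sub_le_sub (log_le_log (by linarith) (by linarith)) (log_le_log hx0 hxy)
    nlinarith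

lemma hbin_star_sub_hbin_le {p D a b : ℝ} (hp0 : 0 ≤ p) (hp : p ≤ 1 / 2) (ha : 0 ≤ a)
    (hb : 0 ≤ b) (hab : (a + b) / 2 ≤ D) (hD : D ≤ 1 / 2) :
    hbin (star p D) - hbin D ≤
      (hbin ((1 - p) * a + p * (1 - b)) + hbin (p * (1 - a) + (1 - p) * b)) / 2
        - (hbin a + hbin b) / 2 := by
  obtain ⟨d, t, rfl, rfl⟩ : ∃ d t, a = d + t ∧ b = d - t :=
    ⟨(a + b) / 2, (a - b) / 2, by ring, by ring⟩
  set ψ := fun t => hbin (star p d + t) + hbin (star p d - t) - (hbin (d + t) + hbin (d - t))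
  have ht : |t| ≤ d := abs_le.2 ⟨by linarith, by linarith⟩
  have hψ : ψ |t| = ψ t := by
    rcases abs_choice t with h | h <;> rw [h]
    simp only [ψ, sub_neg_eq_add, ← sub_eq_add_neg]
    ring
  have hu : (1 - p) * (d + t) + p * (1 - (d - t)) = star p d + t := by unfold _root_.star; ring
  have hv : p * (1 - (d + t)) + (1 - p) * (d - t) = star p d - t := by unfold _root_.star; ring
  calc hbin (star p D) - hbin D
      ≤ hbin (star p d) - hbin d :=
        antitoneOn_hbin_star_sub_hbin hp0 hp ⟨by linarith [abs_nonneg t], by linarith⟩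
          ⟨by linarith [abs_nonneg t], hD⟩ (by linarith)
    _ = ψ 0 / 2 := by simp only [ψ, add_zero, sub_zero]; ring
    _ ≤ ψ |t| / 2 := by
        gcongr
        refine monotoneOn_hbin_spread (by unfold _root_.star; nlinarith)
          (by unfold _root_.star; nlinarith) ⟨le_rfl, ?_⟩ ⟨abs_nonneg t, ht⟩ (abs_nonneg t)
        linarith [abs_nonneg t]
    _ = _ := by rw [hψ, hu, hv]; ring

lemma negMulLog_mul_add_negMulLog_mul_one_sub (c x : ℝ) :
    negMulLog (c * x) + negMulLog (c * (1 - x)) = negMulLog c + c * hbin x := by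
  simp only [negMulLog_mul, hbin]
  ring

lemma condMI_jointCR (p0 : ℝ) {Qh : Bool → Bool → ℝ} (hQ : ∀ x, ∑ xh, Qh xh x = 1) :
    IT.condMI (jointCR p0 Qh) (fun ω => ω.2.2) (fun ω => ω.1) (fun ω => ω.2.1) =
      (hbin ((1 - p0) * Qh true false + p0 * (1 - Qh false true))
        + hbin (p0 * (1 - Qh true false) + (1 - p0) * Qh false true)) / 2
        - (hbin (Qh true false) + hbin (Qh false true)) / 2 := by
  have hff : Qh false false = 1 - Qh true false := by
    linarith [Fintype.sum_bool (Qh · false) ▸ hQ false]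
  have htt : Qh true true = 1 - Qh false true := by
    linarith [Fintype.sum_bool (Qh · true) ▸ hQ true]
  simp only [IT.condMI, IT.condEnt, IT.ent, IT.marg, jointCR, Fintype.sum_prod_type,
    Fintype.sum_bool, Prod.mk.injEq, hff, htt, Bool.true_eq_false, Bool.false_eq_true,
    and_true, and_false, reduceIte, add_zero, zero_add]
  generalize Qh true false = a
  generalize Qh false true = b
  -- every entropy is a sum of pairs `negMulLog (c x) + negMulLog (c (1 - x))`
  have hu := negMulLog_mul_add_negMulLog_mul_one_sub (1 / 2) ((1 - p0) * a + p0 * (1 - b))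
  have hv := negMulLog_mul_add_negMulLog_mul_one_sub (1 / 2) (p0 * (1 - a) + (1 - p0) * b)
  have ha₀ := negMulLog_mul_add_negMulLog_mul_one_sub (1 / 2 * (1 - p0)) a
  have ha₁ := negMulLog_mul_add_negMulLog_mul_one_sub (1 / 2 * p0) a
  have hb₀ := negMulLog_mul_add_negMulLog_mul_one_sub (1 / 2 * p0) b
  have hb₁ := negMulLog_mul_add_negMulLog_mul_one_sub (1 / 2 * (1 - p0)) b
  ring_nf at hu hv ha₀ ha₁ hb₀ hb₁ ⊢
  linear_combination hu + hv - ha₀ - ha₁ - hb₀ - hb₁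

lemma distortion_jointCR (p0 : ℝ) (Qh : Bool → Bool → ℝ) :
    ∑ ω : Bool × Bool × Bool, jointCR p0 Qh ω * (if ω.1 = ω.2.2 then (0 : ℝ) else 1) =
      (Qh true false + Qh false true) / 2 := by
  simp only [jointCR, Fintype.sum_prod_type, Fintype.sum_bool, Bool.true_eq_false,
    Bool.false_eq_true, reduceIte, mul_zero, mul_one, add_zero, zero_add]
  ring

/-- for the binary symmetric source with `BSC(p₀)` side information and
Hamming distortion, the common-reconstruction rate-distortion function is
`min I(X̂;X|S_d) = h(p₀ ⋆ D) − h(D)` for `0 ≤ D ≤ 1/2`. -/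
theorem stmt13 (p0 D : ℝ) (hp0 : 0 < p0) (hp0' : p0 < 1 / 2)
    (hD0 : 0 ≤ D) (hD : D ≤ 1 / 2) :
    sInf { r : ℝ | ∃ Qh : Bool → Bool → ℝ,
        (∀ xh x, 0 ≤ Qh xh x) ∧ (∀ x, ∑ xh, Qh xh x = 1) ∧
        (∑ ω : Bool × Bool × Bool,
            jointCR p0 Qh ω * (if ω.1 = ω.2.2 then (0 : ℝ) else 1)) ≤ D ∧
        r = IT.condMI (jointCR p0 Qh)
              (fun ω => ω.2.2) (fun ω => ω.1) (fun ω => ω.2.1) }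
      = hbin (star p0 D) - hbin D := by
  set bsc : Bool → Bool → ℝ := fun xh x => if xh = x then 1 - D else D
  have hbsc : ∀ x, ∑ xh, bsc xh x = 1 := by
    intro x; cases x <;> simp [bsc]
  refine IsLeast.csInf_eq ⟨⟨bsc, fun xh x => ?_, hbsc, ?_, ?_⟩, ?_⟩
  · unfold bsc; split_ifs <;> linarith
  · rw [distortion_jointCR]; simp [bsc]
  · rw [condMI_jointCR p0 hbsc]
    simp only [bsc, Bool.false_eq_true, Bool.true_eq_false, reduceIte]
    unfold _root_.star; ring_nf
  · rintro r ⟨Qh, hQ0, hQ1, hdist, rfl⟩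
    rw [condMI_jointCR p0 hQ1]
    exact hbin_star_sub_hbin_le hp0.le hp0'.le (hQ0 true false) (hQ0 false true)
      (distortion_jointCR p0 Qh ▸ hdist) hD
end
end
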